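/- arXiv:1508.01212 — 3 statements merged into one kernel-verified Lean document; each statement's English description precedes it below -/
import Mathlib

section
/- Let X be a vector space, Y a subspace, and F : X → X a finite rank linear operator of rank n with F(Y) ⊆ Y. Then F can be written as a sum of n rank-one linear operators each of which maps Y into Y. -/
open Filter Topology

noncomputable section

def FinRank {E F : Type*} [NormedAddCommGroup E] [NormedSpace ℝ E]
    [NormedAddCommGroup F] [NormedSpace ℝ F] (T : E →L[ℝ] F) : Prop :=
  FiniteDimensional ℝ (LinearMap.range (T : E →ₗ[ℝ] F))

def TauLim {E : Type*} [NormedAddCommGroup E] [NormedSpace ℝ E]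
    (S : Set (E →L[ℝ] E)) (T : E →L[ℝ] E) : Prop :=
  ∃ (ι : Type) (l : Filter ι) (F : ι → E →L[ℝ] E), l.NeBot ∧
    (∀ i, F i ∈ S) ∧
    ∀ K : Set E, IsCompact K → ∀ ε : ℝ, 0 < ε →
      ∀ᶠ i in l, ∀ x ∈ K, ‖F i x - T x‖ ≤ ε

def HasAP (E : Type*) [NormedAddCommGroup E] [NormedSpace ℝ E] : Prop :=
  TauLim {F | FinRank F} (ContinuousLinearMap.id ℝ E)

def PairAP {E : Type*} [NormedAddCommGroup E] [NormedSpace ℝ E] (Y : Submodule ℝ E) : Prop :=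
  TauLim {F | FinRank F ∧ ∀ y ∈ Y, F y ∈ Y} (ContinuousLinearMap.id ℝ E)

def NuclearRep {E : Type*} [NormedAddCommGroup E] [NormedSpace ℝ E]
    (T : E →L[ℝ] E) (f : ℕ → StrongDual ℝ E) (x : ℕ → E) : Prop :=
  Summable (fun n => ‖f n‖ * ‖x n‖) ∧ ∀ z, T z = ∑' n, f n z • x n

def IsLinfty (E : Type*) [NormedAddCommGroup E] [NormedSpace ℝ E] : Prop :=
  ∃ C : ℝ, 1 ≤ C ∧ ∀ G : Submodule ℝ E, FiniteDimensional ℝ G →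
    ∃ F : Submodule ℝ E, G ≤ F ∧ FiniteDimensional ℝ F ∧
      ∃ (n : ℕ) (e : F ≃L[ℝ] (Fin n → ℝ)),
        ‖(e : F →L[ℝ] (Fin n → ℝ))‖ * ‖(e.symm : (Fin n → ℝ) →L[ℝ] F)‖ ≤ C

def LocallySplits {E : Type*} [NormedAddCommGroup E] [NormedSpace ℝ E]
    (Y : Submodule ℝ E) : Prop :=
  ∃ P : StrongDual ℝ E →L[ℝ] StrongDual ℝ E,
    (∀ f, P (P f) = P f) ∧
    (∀ f : StrongDual ℝ E, ∀ y ∈ Y, (P f) y = 0) ∧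
    (∀ f : StrongDual ℝ E, (∀ y ∈ Y, f y = 0) → P f = f)

/-! Expand `F z` in a basis of `range F` obtained by joining a basis of `Y ∩ range F` with a basis
of a complement. The basis vectors of the first kind lie in `Y`; the coordinate functionals of the
second kind vanish on `Y ∩ range F ⊇ F(Y)`. -/

theorem Submodule.exists_basis_mem_or_coord_eq_zero {K V : Type*} [DivisionRing K]
    [AddCommGroup V] [Module K V] [FiniteDimensional K V] (S : Submodule K V) :
    ∃ b : Module.Basis (Fin (Module.finrank K V)) K V,
      ∀ k, b k ∈ S ∨ ∀ v ∈ S, b.coord k v = 0 := by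
  obtain ⟨S', hc⟩ := S.exists_isCompl
  let b₀ := ((Module.finBasis K S).prod (Module.finBasis K S')).map (S.prodEquivOfIsCompl S' hc)
  refine ⟨b₀.reindex (b₀.indexEquiv (Module.finBasis K V)), fun k => ?_⟩
  simp only [Module.Basis.reindex_apply, Module.Basis.coord_apply, Module.Basis.repr_reindex_apply]
  rcases (b₀.indexEquiv (Module.finBasis K V)).symm k with i | j
  · left
    simp [b₀]
  · right
    intro v hv
    simp [b₀, Submodule.prodEquivOfIsCompl_symm_apply_left S S' hc ⟨v, hv⟩]

theorem LinearMap.exists_sum_rankOne_of_mapsTo {K X X' : Type*} [Field K]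
    [AddCommGroup X] [Module K X] [AddCommGroup X'] [Module K X']
    (F : X →ₗ[K] X') [FiniteDimensional K (LinearMap.range F)]
    {Y : Submodule K X} {Y' : Submodule K X'} (hFY : ∀ y ∈ Y, F y ∈ Y') :
    ∃ (f : Fin (Module.finrank K (LinearMap.range F)) → (X →ₗ[K] K)) (x : _ → X'),
      (∀ k, (∀ y ∈ Y, f k y = 0) ∨ x k ∈ Y') ∧ ∀ z, F z = ∑ k, f k z • x k := by
  obtain ⟨b, hb⟩ := (Y'.comap (LinearMap.range F).subtype).exists_basis_mem_or_coord_eq_zero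
  refine ⟨fun k => (b.coord k).comp F.rangeRestrict, fun k => b k, fun k => ?_, fun z => ?_⟩
  · exact (hb k).symm.imp (fun h y hy => h _ (hFY y hy)) fun h => h
  · have h := congrArg Subtype.val (b.sum_repr (F.rangeRestrict z))
    simp only [Submodule.coe_sum, Submodule.coe_smul, LinearMap.codRestrict_apply] at h
    exact h.symm

theorem stmt1 {K X : Type*} [Field K] [AddCommGroup X] [Module K X]
    (Y : Submodule K X) (F : X →ₗ[K] X) (n : ℕ)
    (hfin : FiniteDimensional K (LinearMap.range F))
    (hrank : Module.finrank K (LinearMap.range F) = n)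
    (hFY : ∀ y ∈ Y, F y ∈ Y) :
    ∃ (f : Fin n → (X →ₗ[K] K)) (x : Fin n → X),
      (∀ k, (∀ y ∈ Y, f k y = 0) ∨ x k ∈ Y) ∧
      ∀ z, F z = ∑ k, f k z • x k := by
  subst hrank
  exact F.exists_sum_rankOne_of_mapsTo hFY
end
end

section
/- If (X,Y) has the approximation property (the identity on X is a τ-limit of finite rank operators leaving Y invariant), then the quotient X/Y has the approximation property. -/
/-!
A finite-rank `F` leaving `Y` invariant induces the finite-rank `F̄` with `F̄ (mk x) = mk (F x)`,
and `‖F̄ (mk x) - mk x‖ ≤ ‖F x - x‖`. Uniform convergence of the `F` on compact subsets of `X`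
therefore passes to the `F̄` on compact subsets of `X ⧸ Y`, once every compact `K ⊆ X ⧸ Y` is
known to lie in the image of a compact subset of `X`. For this take finite `2⁻ⁿ`-nets `Nₙ` of `K`:
each `q ∈ K` is the limit of net points `pₙ ∈ Nₙ`, and lifting `p₀` and the short differences
`pₙ₊₁ - pₙ` with almost minimal norm writes a preimage of `q` as a series whose `n`-th term ranges
over a finite set of vectors of norm `≤ 3 · 2⁻ⁿ`; all such sums form a compact set.
-/

open Filter Topology

noncomputable section

namespace Submodule

variable {R M M₂ : Type*} [Ring R] [AddCommGroup M] [Module R M] [TopologicalSpace M]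
  [AddCommGroup M₂] [Module R M₂] [TopologicalSpace M₂] (S : Submodule R M) (T : Submodule R M₂)

def mapQL (f : M →L[R] M₂) (h : S ≤ T.comap (f : M →ₗ[R] M₂)) : M ⧸ S →L[R] M₂ ⧸ T :=
  S.liftQL (T.mkQL.comp f) fun _ hx => (Quotient.mk_eq_zero T).2 (h hx)

@[simp]
theorem mapQL_mk (f : M →L[R] M₂) (h : S ≤ T.comap (f : M →ₗ[R] M₂)) (x : M) :
    S.mapQL T f h (Quotient.mk x) = Quotient.mk (f x) :=
  rfl

@[simp]
theorem toLinearMap_mapQL (f : M →L[R] M₂) (h : S ≤ T.comap (f : M →ₗ[R] M₂)) :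
    (S.mapQL T f h : M ⧸ S →ₗ[R] M₂ ⧸ T) = S.mapQ T (f : M →ₗ[R] M₂) h :=
  rfl

end Submodule

section FiniteRank

variable {E F : Type*} [NormedAddCommGroup E] [NormedSpace ℝ E]
  [NormedAddCommGroup F] [NormedSpace ℝ F] {S : Submodule ℝ E} {T : Submodule ℝ F}
  [IsClosed (S : Set E)] [IsClosed (T : Set F)]

theorem FinRank.mapQL {f : E →L[ℝ] F} (hf : FinRank f) (h : S ≤ T.comap (f : E →ₗ[ℝ] F)) :
    FinRank (S.mapQL T f h) := by
  unfold FinRank at hf ⊢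
  rw [Submodule.toLinearMap_mapQL, Submodule.range_mapQ]
  infer_instance

end FiniteRank

theorem isCompact_range_tsum {E : Type*} [NormedAddCommGroup E] [CompleteSpace E]
    {A : ℕ → Finset E} {u : ℕ → ℝ} (hu : Summable u) (hA : ∀ n, ∀ x ∈ A n, ‖x‖ ≤ u n) :
    IsCompact (Set.range fun z : (∀ n, A n) => ∑' n, (z n : E)) :=
  isCompact_range <| continuous_tsum (fun n => continuous_subtype_val.comp (continuous_apply n))
    hu fun n z => hA n _ (z n).2

namespace Submodule.Quotient

open scoped Pointwise

variable {R M : Type*} [Ring R] [NormedAddCommGroup M] [Module R M] {S : Submodule R M}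
  [IsClosed (S : Set M)]

theorem mk_add_tsum_eq_of_tendsto {p : ℕ → M ⧸ S} {q : M ⧸ S} (hp : Tendsto p atTop (𝓝 q))
    {x₀ : M} (hx₀ : mk x₀ = p 0) {z : ℕ → M} (hz : Summable z)
    (hzp : ∀ n, mk (z n) = p (n + 1) - p n) :
    mk (x₀ + ∑' n, z n) = q := by
  have hsum : HasSum (fun n => mk (z n) : ℕ → M ⧸ S) (mk (∑' n, z n)) :=
    hz.hasSum.map S.mkQ continuous_quot_mk
  have htel :
      Tendsto (fun n => ∑ i ∈ Finset.range n, (mk (z i) : M ⧸ S)) atTop (𝓝 (q - p 0)) := by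
    simp_rw [hzp, Finset.sum_range_sub]
    exact hp.sub_const _
  rw [mk_add, hx₀, tendsto_nhds_unique hsum.tendsto_sum_nat htel, add_sub_cancel]

theorem exists_isCompact_subset_image_mk [CompleteSpace M] {K : Set (M ⧸ S)} (hK : IsCompact K) :
    ∃ C : Set M, IsCompact C ∧ K ⊆ mk '' C := by
  classical
  set δ : ℕ → ℝ := fun n => (1 / 2) ^ n with hδ_def
  have hδ : ∀ n, 0 < δ n := fun n => by positivity
  choose N hN using fun n => hK.elim_nhds_subcover (fun p => Metric.ball p (δ n))
    fun p _ => Metric.ball_mem_nhds p (hδ n)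
  choose lift hlift_mk hlift_norm using fun n (d : M ⧸ S) => norm_mk_lt d (hδ n)
  let A : ℕ → Finset M := fun n =>
    ((N (n + 1) ×ˢ N n).filter fun ab => ‖ab.1 - ab.2‖ < δ (n + 1) + δ n).image
      fun ab => lift n (ab.1 - ab.2)
  have hA : ∀ n, ∀ x ∈ A n, ‖x‖ ≤ 3 * δ n := by
    intro n x hx
    obtain ⟨⟨a, b⟩, hab, rfl⟩ := Finset.mem_image.1 hx
    have hab : ‖a - b‖ < δ (n + 1) + δ n := (Finset.mem_filter.1 hab).2
    have hδ_succ : δ (n + 1) = δ n / 2 := by simp only [hδ_def, pow_succ]; ring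
    exact (hlift_norm n (a - b)).le.trans (by linarith [hδ n])
  refine ⟨lift 0 '' N 0 + Set.range fun z : (∀ n, A n) => ∑' n, (z n : M),
    ((N 0).finite_toSet.image _).isCompact.add
      (isCompact_range_tsum (summable_geometric_two.mul_left 3) hA), fun q hq => ?_⟩
  have hnet : ∀ n, ∃ p ∈ N n, dist q p < δ n := fun n => by
    simpa only [Set.mem_iUnion, Metric.mem_ball, exists_prop] using (hN n).2 hq
  choose p hpN hpq using hnet
  have hp_step : ∀ n, ‖p (n + 1) - p n‖ < δ (n + 1) + δ n := fun n =>
    calc ‖p (n + 1) - p n‖ = dist (p (n + 1)) (p n) := (dist_eq_norm _ _).symm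
      _ ≤ dist q (p (n + 1)) + dist q (p n) := dist_triangle_left _ _ _
      _ < δ (n + 1) + δ n := add_lt_add (hpq _) (hpq _)
  have hpA : ∀ n, lift n (p (n + 1) - p n) ∈ A n := fun n =>
    Finset.mem_image.2 ⟨(p (n + 1), p n),
      Finset.mem_filter.2 ⟨Finset.mem_product.2 ⟨hpN _, hpN _⟩, hp_step n⟩, rfl⟩
  have hp : Tendsto p atTop (𝓝 q) := tendsto_iff_dist_tendsto_zero.2 <|
    squeeze_zero (fun _ => dist_nonneg) (fun n => (dist_comm q (p n) ▸ hpq n).le)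
      (tendsto_pow_atTop_nhds_zero_of_lt_one (by norm_num) (by norm_num))
  refine ⟨lift 0 (p 0) + ∑' n, lift n (p (n + 1) - p n),
    Set.add_mem_add ⟨_, hpN 0, rfl⟩ ⟨fun n => ⟨_, hpA n⟩, rfl⟩, ?_⟩
  exact mk_add_tsum_eq_of_tendsto hp (hlift_mk 0 _)
    (.of_norm_bounded (summable_geometric_two.mul_left 3) fun n => hA n _ (hpA n))
    fun n => hlift_mk n _

end Submodule.Quotient

variable {X : Type*} [NormedAddCommGroup X] [NormedSpace ℝ X] [CompleteSpace X]

theorem stmt9 (Y : Submodule ℝ X) [hY : IsClosed (Y : Set X)]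
    (hpair : PairAP Y) :
    HasAP (X ⧸ Y) := by
  obtain ⟨ι, l, F, hl, hF, hF_tendsto⟩ := hpair
  refine ⟨ι, l, fun i => Y.mapQL Y (F i) (hF i).2, hl, fun i => (hF i).1.mapQL _,
    fun K hK ε hε => ?_⟩
  obtain ⟨C, hC, hKC⟩ := Submodule.Quotient.exists_isCompact_subset_image_mk hK
  filter_upwards [hF_tendsto C hC ε hε] with i hi
  intro q hq
  obtain ⟨x, hx, rfl⟩ := hKC hq
  calc ‖Y.mapQL Y (F i) (hF i).2 (Submodule.Quotient.mk x)
          - ContinuousLinearMap.id ℝ (X ⧸ Y) (Submodule.Quotient.mk x)‖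
      = ‖(Submodule.Quotient.mk (F i x - x) : X ⧸ Y)‖ := by
        rw [Submodule.mapQL_mk, ContinuousLinearMap.id_apply, Submodule.Quotient.mk_sub]
    _ ≤ ‖F i x - x‖ := Submodule.Quotient.norm_mk_le Y _
    _ ≤ ε := hi x hx
end
end

section
/- Let X be a reflexive Banach space and Y ⊆ X a closed subspace such that every nuclear operator T on X with T(X) ⊆ Y and T(Y) = 0 has trace zero over every representation (i.e., whenever T = Σ x_n* ⊗ x_n with Σ‖x_n*‖‖x_n‖ < ∞ and the associated operator satisfies TX ⊆ Y, TY = 0, then Σ x_n*(x_n) = 0). If moreover X has the AP, then the identity on X cannot be separated from the set F_Y(X) of finite rank operators leaving Y invariant by any τ-continuous linear functional on L(X). -/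
open Filter Topology

noncomputable section

/-!
The functional `S ↦ ∑ fₙ (S xₙ)` is the trace pairing `⟨S, T⟩` with the nuclear operator
`T = ∑ fₙ ⊗ xₙ`. On a rank-one operator `g ⊗ z` it takes the value `g (T z)`, and `g ⊗ z` leaves
`Y` invariant as soon as `z ∈ Y` or `g` annihilates `Y`. Vanishing on these operators therefore
gives `T Y = 0` and `g (T X) = 0` for all `g ∈ Y⊥`, i.e. `T X ⊆ Y` since `Y` is closed.
The trace hypothesis then says `∑ fₙ xₙ = 0`.
-/

theorem FinRank.smulRight {E F : Type*} [NormedAddCommGroup E] [NormedSpace ℝ E]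
    [NormedAddCommGroup F] [NormedSpace ℝ F] (g : StrongDual ℝ E) (z : F) :
    FinRank (g.smulRight z) := by
  have hle : LinearMap.range ((g.smulRight z : E →L[ℝ] F) : E →ₗ[ℝ] F) ≤ ℝ ∙ z := by
    rintro _ ⟨w, rfl⟩
    exact Submodule.smul_mem _ _ (Submodule.mem_span_singleton_self z)
  exact Submodule.finiteDimensional_of_le hle

theorem Submodule.mem_of_forall_dual_eq_zero {E : Type*} [NormedAddCommGroup E]
    [NormedSpace ℝ E] {Y : Submodule ℝ E} (hY : IsClosed (Y : Set E)) {z : E}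
    (h : ∀ g : StrongDual ℝ E, (∀ y ∈ Y, g y = 0) → g z = 0) : z ∈ Y := by
  by_contra hz
  obtain ⟨g, hg⟩ := SeparatingDual.exists_ne_zero (R := ℝ) (V := E ⧸ Y)
    (x := Y.mkQ z) (by simpa using hz)
  exact hg (h (g.comp Y.mkQL) fun y hy => by simp [(Submodule.Quotient.mk_eq_zero Y).2 hy])

section Nuclear

variable {E F : Type*} [NormedAddCommGroup E] [NormedSpace ℝ E]
  [NormedAddCommGroup F] [NormedSpace ℝ F] [CompleteSpace F]
  {f : ℕ → StrongDual ℝ E} {x : ℕ → F}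

def nuclearOp (f : ℕ → StrongDual ℝ E) (x : ℕ → F) : E →L[ℝ] F :=
  ∑' n, (f n).smulRight (x n)

theorem summable_smulRight (hfx : Summable fun n => ‖f n‖ * ‖x n‖) :
    Summable fun n => (f n).smulRight (x n) :=
  .of_norm <| by simpa [ContinuousLinearMap.norm_smulRight_apply] using hfx

theorem nuclearOp_apply (hfx : Summable fun n => ‖f n‖ * ‖x n‖) (z : E) :
    nuclearOp f x z = ∑' n, f n z • x n := by
  simpa [nuclearOp] using (ContinuousLinearMap.apply ℝ F z).map_tsum (summable_smulRight hfx)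

theorem nuclearRep_nuclearOp [CompleteSpace E] {x : ℕ → E}
    (hfx : Summable fun n => ‖f n‖ * ‖x n‖) :
    NuclearRep (nuclearOp f x) f x :=
  ⟨hfx, nuclearOp_apply hfx⟩

theorem dual_nuclearOp_apply (hfx : Summable fun n => ‖f n‖ * ‖x n‖)
    (g : StrongDual ℝ F) (z : E) :
    g (nuclearOp f x z) = ∑' n, f n (g.smulRight z (x n)) := by
  have hz : Summable fun n => f n z • x n := by
    simpa using (summable_smulRight hfx).mapL (ContinuousLinearMap.apply ℝ F z)
  rw [nuclearOp_apply hfx, g.map_tsum hz]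
  simp [mul_comm]

end Nuclear

variable {X : Type*} [NormedAddCommGroup X] [NormedSpace ℝ X] [CompleteSpace X]

theorem stmt19_general (Y : Submodule ℝ X) (hY : IsClosed (Y : Set X))
    (htr : ∀ (T : X →L[ℝ] X) (f : ℕ → StrongDual ℝ X) (x : ℕ → X),
      NuclearRep T f x → (∀ z, T z ∈ Y) → (∀ y ∈ Y, T y = 0) →
      ∑' n, f n (x n) = 0) :
    ∀ (f : ℕ → StrongDual ℝ X) (x : ℕ → X),
      Summable (fun n => ‖f n‖ * ‖x n‖) →
      (∀ F : X →L[ℝ] X, FinRank F → (∀ y ∈ Y, F y ∈ Y) →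
        ∑' n, f n (F (x n)) = 0) →
      ∑' n, f n (x n) = 0 := by
  intro f x hfx hvan
  set T := nuclearOp f x
  have hrankOne : ∀ (g : StrongDual ℝ X) (z : X), (∀ y ∈ Y, g y • z ∈ Y) → g (T z) = 0 :=
    fun g z hgz => (dual_nuclearOp_apply hfx g z).trans
      (hvan _ (FinRank.smulRight g z) (by simpa using hgz))
  have hTY : ∀ y ∈ Y, T y = 0 := fun y hy =>
    SeparatingDual.eq_zero_of_forall_dual_eq_zero fun g =>
      hrankOne g y fun y' _ => Y.smul_mem _ hy
  have hTX : ∀ z, T z ∈ Y := fun z =>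
    Submodule.mem_of_forall_dual_eq_zero hY fun g hg =>
      hrankOne g z fun y hy => by simp [hg y hy]
  exact htr T f x (nuclearRep_nuclearOp hfx) hTX hTY

theorem stmt19 (Y : Submodule ℝ X) (hY : IsClosed (Y : Set X))
    (hrefl : Function.Surjective (NormedSpace.inclusionInDoubleDual ℝ X))
    (hXAP : HasAP X)
    (htr : ∀ (T : X →L[ℝ] X) (f : ℕ → StrongDual ℝ X) (x : ℕ → X),
      NuclearRep T f x → (∀ z, T z ∈ Y) → (∀ y ∈ Y, T y = 0) →
      ∑' n, f n (x n) = 0) :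
    ∀ (f : ℕ → StrongDual ℝ X) (x : ℕ → X),
      Summable (fun n => ‖f n‖ * ‖x n‖) →
      (∀ F : X →L[ℝ] X, FinRank F → (∀ y ∈ Y, F y ∈ Y) →
        ∑' n, f n (F (x n)) = 0) →
      ∑' n, f n (x n) = 0 :=
  stmt19_general Y hY htr
end
end
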